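/- Let k be a commutative ring, C a skeletally small category, and M a locally finite endo-length C-module. Then there exists a family (M_i)_{i ∈ Λ} of submodules of M such that M is the internal direct sum ⊕_{i ∈ Λ} M_i and each M_i is indecomposable. -/

import Mathlib

open CategoryTheory

universe u v

variable {k : Type u} [CommRing k] {C : Type v} [SmallCategory C]

/-- The representation of the endomorphism monoid `End a` on `M a` induced by a
`C`-module (functor) `M`. -/
@[simps]
noncomputable def endRep (M : C ⥤ ModuleCat.{u} k) (a : C) :
    Representation k (CategoryTheory.End a) (M.obj a) where
  toFun g := (M.map g).hom
  map_one' := by simp [End.one_def]; rfl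
  map_mul' g h := by simp [End.mul_def]; rfl

/-- `M` is locally finite endo-length if each `M a` has finite length as a
module over the monoid algebra `k[End a]`. -/
noncomputable def IsLocallyFiniteEndoLength (M : C ⥤ ModuleCat.{u} k) : Prop :=
  ∀ a : C,
    IsFiniteLength (MonoidAlgebra k (CategoryTheory.End a)) ((endRep M a).asModule)

/-- A submodule (subfunctor) of the `C`-module `M`. -/
structure Subfunctor (M : C ⥤ ModuleCat.{u} k) where
  toFun : ∀ a : C, Submodule k (M.obj a)
  map_mem : ∀ {a b : C} (α : a ⟶ b) {x : M.obj a}, x ∈ toFun a → M.map α x ∈ toFun b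

instance (M : C ⥤ ModuleCat.{u} k) : PartialOrder (Subfunctor M) :=
  PartialOrder.lift Subfunctor.toFun (fun X Y h => by cases X; cases Y; congr)

/-- A submodule of `M`, viewed as a `C`-module in its own right. -/
def Subfunctor.toFunctor {M : C ⥤ ModuleCat.{u} k} (N : Subfunctor M) :
    C ⥤ ModuleCat.{u} k where
  obj a := ModuleCat.of k (N.toFun a)
  map α := ModuleCat.ofHom ((M.map α).hom.restrict fun x hx => N.map_mem α hx)
  map_id a := by
    ext x
    simp [LinearMap.restrict_apply, CategoryTheory.Functor.map_id] <;> rfl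
  map_comp f g := by
    ext x
    simp [LinearMap.restrict_apply, CategoryTheory.Functor.map_comp] <;> rfl

/-- A `C`-module is indecomposable if it is nonzero and it is not the internal
direct sum of two nonzero submodules. -/
def IsIndecomposable (M : C ⥤ ModuleCat.{u} k) : Prop :=
  (∃ (a : C) (x : M.obj a), x ≠ 0) ∧
    ∀ X Y : Subfunctor M, (∀ a : C, IsCompl (X.toFun a) (Y.toFun a)) →
      (∀ a : C, X.toFun a = ⊥) ∨ (∀ a : C, Y.toFun a = ⊥)

/-!
Subfunctors of `M` form a complete modular lattice, with joins and meets computed objectwise,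
compactly generated by the subfunctors generated by single elements. Finite endo-length makes every
chain of subfunctors stabilise at each object, so along a chain of pairs `(A, B)` with `A`
increasing, `B` decreasing and `A ⊕ B = N`, the limit pair `(⨆ A, ⨅ B)` again satisfies
`(⨆ A) ⊕ (⨅ B) = N`.

Zorn's lemma is then used twice. First, a nonzero `N` has an indecomposable direct summand: among
decompositions `N = X ⊕ Y` with `X` nonzero at a fixed object `a₀`, a maximal one (`X` shrinking,
`Y` growing) has `X` indecomposable, since a splitting `X = U ⊕ V` with `U` nonzero at `a₀` lets
`(U, Y ⊕ V)` replace `(X, Y)`. Second, among pairs `(S, Y)` with `S` an independent set of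
indecomposables and `Y` a complement of `⨆ S`, a maximal one has `Y = 0`, since otherwise an
indecomposable summand of `Y` could be added to `S`.
-/

open OrderDual

def IsDirectlyIndecomposable {α : Type*} [Lattice α] [OrderBot α] (x : α) : Prop :=
  x ≠ ⊥ ∧ ∀ y z, Disjoint y z → y ⊔ z = x → y = ⊥ ∨ z = ⊥

theorem sSupIndep.insert {α : Type*} [CompleteLattice α] [IsModularLattice α] {S : Set α} {x : α}
    (hS : sSupIndep S) (hx : Disjoint x (sSup S)) : sSupIndep (insert x S) := by
  intro y hy
  by_cases hyx : y = x
  · subst hyx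
    exact hx.mono_right (sSup_le_sSup fun z hz => hz.1.resolve_left hz.2)
  have hyS : y ∈ S := hy.resolve_left hyx
  rw [← Set.insert_sdiff_singleton_comm (Ne.symm hyx), sSup_insert, sup_comm]
  refine (hS hyS).disjoint_sup_right_of_disjoint_sup_left ?_
  exact hx.symm.mono_left (sup_le (le_sSup hyS) (sSup_le_sSup Set.sdiff_subset))

theorem IsChain.exists_forall_le_of_wellFoundedGT {α β : Type*} [Preorder α] [Preorder β]
    [WellFoundedGT β] {f : α → β} (hf : Monotone f) {c : Set α} (hc : IsChain (· ≤ ·) c)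
    (hne : c.Nonempty) : ∃ x ∈ c, ∀ y ∈ c, f y ≤ f x := by
  obtain ⟨_, ⟨x, hx, rfl⟩, hmax⟩ := wellFounded_gt.has_min (f '' c) (hne.image f)
  refine ⟨x, hx, fun y hy => ?_⟩
  rcases hc.total hx hy with hxy | hyx
  · by_contra h
    exact hmax _ ⟨y, hy, rfl⟩ (lt_of_le_not_ge (hf hxy) h)
  · exact hf hyx

section IndecomposableSplitting

variable {α : Type*} [CompleteLattice α]

def IsIndecomposableSplitting (S : Set α) (y : α) : Prop :=
  (∀ x ∈ S, IsDirectlyIndecomposable x) ∧ sSupIndep S ∧ IsCompl (sSup S) y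

theorem IsIndecomposableSplitting.insert [IsModularLattice α] {S : Set α} {x y z : α}
    (h : IsIndecomposableSplitting S y) (hx : IsDirectlyIndecomposable x) (hxz : Disjoint x z)
    (hxzy : x ⊔ z = y) : IsIndecomposableSplitting (insert x S) z := by
  obtain ⟨hind, hS, hcompl⟩ := h
  refine ⟨?_, hS.insert (hcompl.disjoint.symm.mono_left (hxzy ▸ le_sup_left)), ?_⟩
  · rintro w (rfl | hw)
    exacts [hx, hind w hw]
  · rw [sSup_insert, sup_comm]
    exact hxz.isCompl_sup_left_of_isCompl_sup_right (hxzy ▸ hcompl)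

-- For a chain `c` in `α × αᵒᵈ`, `p.1` increases and `ofDual p.2` decreases along `c`, and
-- `sSup c = (⨆ p.1, ⨅ ofDual p.2)`.
theorem isIndecomposableSplitting_sSup_of_isChain [IsCompactlyGenerated α]
    (hchain : ∀ c : Set (α × αᵒᵈ), IsChain (· ≤ ·) c → c.Nonempty →
      (∀ p ∈ c, IsCompl p.1 (ofDual p.2)) → IsCompl (sSup c).1 (ofDual (sSup c).2))
    {c : Set (Set α × αᵒᵈ)} (hc : IsChain (· ≤ ·) c) (hne : c.Nonempty)
    (h : ∀ p ∈ c, IsIndecomposableSplitting p.1 (ofDual p.2)) :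
    IsIndecomposableSplitting (sSup c).1 (ofDual (sSup c).2) := by
  refine ⟨?_, ?_, ?_⟩
  · rintro x ⟨_, ⟨p, hp, rfl⟩, hx⟩
    exact (h p hp).1 x hx
  · rw [Prod.fst_sSup]
    refine iSupIndep_sUnion_of_directed (monotone_fst.isChain_image hc).directedOn ?_
    rintro _ ⟨p, hp, rfl⟩
    exact (h p hp).2.1
  · have hg : Monotone (Prod.map sSup id : Set α × αᵒᵈ → α × αᵒᵈ) :=
      (show Monotone (sSup : Set α → α) from fun _ _ h => sSup_le_sSup h).prodMap monotone_id
    have hcompl := hchain _ (hg.isChain_image hc) (hne.image _) (by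
      rintro _ ⟨p, hp, rfl⟩
      exact (h p hp).2.2)
    convert hcompl using 2
    · rw [Prod.fst_sSup, Prod.fst_sSup, Set.sSup_eq_sUnion, sSup_sUnion, iSup_image,
        Set.image_image, sSup_image]
      rfl
    · simp [Prod.snd_sSup, Set.image_image]

theorem exists_sSupIndep_sSup_eq_top_of_isDirectlyIndecomposable [IsModularLattice α]
    [IsCompactlyGenerated α]
    (hchain : ∀ c : Set (α × αᵒᵈ), IsChain (· ≤ ·) c → c.Nonempty →
      (∀ p ∈ c, IsCompl p.1 (ofDual p.2)) → IsCompl (sSup c).1 (ofDual (sSup c).2))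
    (hsummand : ∀ y : α, y ≠ ⊥ → ∃ x z, IsDirectlyIndecomposable x ∧ Disjoint x z ∧ x ⊔ z = y) :
    ∃ S : Set α, sSupIndep S ∧ sSup S = ⊤ ∧ ∀ x ∈ S, IsDirectlyIndecomposable x := by
  set T : Set (Set α × αᵒᵈ) := {p | IsIndecomposableSplitting p.1 (ofDual p.2)}
  have hT₀ : (∅, toDual ⊤) ∈ T := ⟨by simp, sSupIndep_empty, by simpa using isCompl_bot_top⟩
  obtain ⟨m, -, hm⟩ := zorn_le_nonempty₀ T (fun c hcT hc y hy =>
    ⟨sSup c, isIndecomposableSplitting_sSup_of_isChain hchain hc ⟨y, hy⟩ hcT,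
      fun _ hz => le_sSup hz⟩) _ hT₀
  have hY : ofDual m.2 = ⊥ := by
    by_contra hY
    obtain ⟨x, z, hx, hxz, hxzY⟩ := hsummand _ hY
    have hle : m ≤ (insert x m.1, toDual z) :=
      ⟨Set.subset_insert _ _, (hxzY ▸ le_sup_right : z ≤ ofDual m.2)⟩
    have hxS : x ∈ m.1 := (hm.2 (hm.1.insert hx hxz hxzY) hle).1 (Set.mem_insert _ _)
    exact hx.1 (disjoint_self.1 (hm.1.2.2.disjoint.mono (le_sSup hxS) (hxzY ▸ le_sup_left)))
  obtain ⟨hind, hS, hcompl⟩ := hm.1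
  exact ⟨m.1, hS, eq_top_of_isCompl_bot (hY ▸ hcompl), hind⟩

end IndecomposableSplitting

namespace Subfunctor

variable {M : C ⥤ ModuleCat.{u} k}

theorem toFun_injective :
    Function.Injective (toFun : Subfunctor M → ∀ a, Submodule k (M.obj a)) :=
  fun X Y h => by cases X; cases Y; congr

@[ext]
theorem ext {X Y : Subfunctor M} (h : ∀ a, X.toFun a = Y.toFun a) : X = Y :=
  toFun_injective (funext h)

theorem map_toFun_le (N : Subfunctor M) {a b : C} (α : a ⟶ b) :
    (N.toFun a).map (M.map α).hom ≤ N.toFun b :=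
  Submodule.map_le_iff_le_comap.2 fun _ => N.map_mem α

instance : Max (Subfunctor M) where
  max X Y := ⟨fun a => X.toFun a ⊔ Y.toFun a, fun α _ hx => by
    have := Submodule.map_sup (X.toFun _) (Y.toFun _) (M.map α).hom ▸
      sup_le_sup (X.map_toFun_le α) (Y.map_toFun_le α)
    exact this (Submodule.mem_map_of_mem hx)⟩

instance : Min (Subfunctor M) where
  min X Y := ⟨fun a => X.toFun a ⊓ Y.toFun a, fun α _ hx => ⟨X.map_mem α hx.1, Y.map_mem α hx.2⟩⟩

instance : SupSet (Subfunctor M) where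
  sSup S := ⟨fun a => sSup ((toFun · a) '' S), fun α _ hx => by
    have : (sSup ((toFun · _) '' S)).map (M.map α).hom ≤ sSup ((toFun · _) '' S) := by
      simp only [sSup_image, Submodule.map_iSup]
      exact iSup₂_mono fun N _ => N.map_toFun_le α
    exact this (Submodule.mem_map_of_mem hx)⟩

instance : InfSet (Subfunctor M) where
  sInf S := ⟨fun a => sInf ((toFun · a) '' S), fun α _ hx => by
    simp only [sInf_image, Submodule.mem_iInf] at hx ⊢
    exact fun N hN => N.map_mem α (hx N hN)⟩

instance : Top (Subfunctor M) := ⟨⟨fun _ => ⊤, fun _ _ _ => trivial⟩⟩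

instance : Bot (Subfunctor M) where
  bot := ⟨fun _ => ⊥, fun α x hx => by simp [(Submodule.mem_bot k).1 hx]⟩

@[simp] theorem toFun_sup (X Y : Subfunctor M) (a : C) :
    (X ⊔ Y).toFun a = X.toFun a ⊔ Y.toFun a := rfl

@[simp] theorem toFun_inf (X Y : Subfunctor M) (a : C) :
    (X ⊓ Y).toFun a = X.toFun a ⊓ Y.toFun a := rfl

theorem toFun_sSup (S : Set (Subfunctor M)) (a : C) :
    (sSup S).toFun a = sSup ((toFun · a) '' S) := rfl

theorem toFun_sInf (S : Set (Subfunctor M)) (a : C) :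
    (sInf S).toFun a = sInf ((toFun · a) '' S) := rfl

@[simp] theorem toFun_top (a : C) : (⊤ : Subfunctor M).toFun a = ⊤ := rfl

@[simp] theorem toFun_bot (a : C) : (⊥ : Subfunctor M).toFun a = ⊥ := rfl

instance : CompleteLattice (Subfunctor M) :=
  toFun_injective.completeLattice _ Iff.rfl Iff.rfl (fun _ _ => rfl) (fun _ _ => rfl)
    (fun S => funext fun a => by simp [toFun_sSup, sSup_image])
    (fun S => funext fun a => by simp [toFun_sInf, sInf_image]) rfl rfl

instance : IsModularLattice (Subfunctor M) where
  sup_inf_le_assoc_of_le y _ hxz a := IsModularLattice.sup_inf_le_assoc_of_le (y.toFun a) (hxz a)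

@[simp] theorem toFun_iSup {ι : Sort*} (X : ι → Subfunctor M) (a : C) :
    (⨆ i, X i).toFun a = ⨆ i, (X i).toFun a := by
  simp [iSup, toFun_sSup, ← Set.range_comp, Function.comp_def]

theorem eq_bot_iff_forall {X : Subfunctor M} : X = ⊥ ↔ ∀ a, X.toFun a = ⊥ :=
  Subfunctor.ext_iff

theorem disjoint_iff_forall {X Y : Subfunctor M} :
    Disjoint X Y ↔ ∀ a, Disjoint (X.toFun a) (Y.toFun a) := by
  simp only [_root_.disjoint_iff, eq_bot_iff_forall, toFun_inf]

theorem isCompl_iff_forall {X Y : Subfunctor M} :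
    IsCompl X Y ↔ ∀ a, IsCompl (X.toFun a) (Y.toFun a) := by
  simp only [_root_.isCompl_iff, _root_.disjoint_iff, _root_.codisjoint_iff, Subfunctor.ext_iff,
    toFun_inf, toFun_sup, toFun_bot, toFun_top, forall_and]

theorem iSupIndep_iff_forall {ι : Type*} {X : ι → Subfunctor M} :
    iSupIndep X ↔ ∀ a, iSupIndep fun i => (X i).toFun a := by
  simp only [iSupIndep, disjoint_iff_forall, toFun_iSup]
  exact forall_comm

def ofSection {a : C} (x : M.obj a) : Subfunctor M where
  toFun b := Submodule.span k (Set.range fun α : a ⟶ b => M.map α x)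
  map_mem {b c} β y hy := by
    have : (Submodule.span k (Set.range fun α : a ⟶ b => M.map α x)).map (M.map β).hom ≤
        Submodule.span k (Set.range fun α : a ⟶ c => M.map α x) := by
      rw [Submodule.map_span, ← Set.range_comp]
      exact Submodule.span_mono (Set.range_subset_iff.2 fun α => ⟨α ≫ β, by simp⟩)
    exact this (Submodule.mem_map_of_mem hy)

theorem mem_ofSection_self {a : C} (x : M.obj a) : x ∈ (ofSection x).toFun a :=
  Submodule.subset_span ⟨𝟙 a, by simp⟩

theorem ofSection_le_iff {a : C} (x : M.obj a) (N : Subfunctor M) :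
    ofSection x ≤ N ↔ x ∈ N.toFun a := by
  refine ⟨fun h => h a (mem_ofSection_self x), fun hx b => ?_⟩
  exact Submodule.span_le.2 (Set.range_subset_iff.2 fun α => N.map_mem α hx)

theorem isCompactElement_ofSection {a : C} (x : M.obj a) : IsCompactElement (ofSection x) := by
  rw [CompleteLattice.isCompactElement_iff_le_of_directed_sSup_le]
  intro S hne hdir hle
  rw [ofSection_le_iff, toFun_sSup, Submodule.mem_sSup_of_directed (hne.image _)
    (hdir.mono_comp fun _ _ h => h a)] at hle
  obtain ⟨_, ⟨N, hN, rfl⟩, hx⟩ := hle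
  exact ⟨N, hN, (ofSection_le_iff x N).2 hx⟩

instance : IsCompactlyGenerated (Subfunctor M) where
  exists_sSup_eq N := by
    set S : Set (Subfunctor M) := {X | ∃ (a : C) (x : M.obj a), x ∈ N.toFun a ∧ ofSection x = X}
    refine ⟨S, ?_, le_antisymm (sSup_le ?_) fun a x hx => ?_⟩
    · rintro _ ⟨a, x, -, rfl⟩
      exact isCompactElement_ofSection x
    · rintro _ ⟨a, x, hx, rfl⟩
      exact (ofSection_le_iff x N).2 hx
    · exact le_sSup (s := S) ⟨a, x, hx, rfl⟩ a (mem_ofSection_self x)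

def orderIsoIic (N : Subfunctor M) : Subfunctor N.toFunctor ≃o Set.Iic N where
  toFun W := ⟨⟨fun a => (W.toFun a).map (N.toFun a).subtype, fun α _ hx => by
      obtain ⟨w, hw, rfl⟩ := hx
      exact ⟨N.toFunctor.map α w, W.map_mem α hw, rfl⟩⟩,
    fun a => Submodule.map_subtype_le _ _⟩
  invFun Y := ⟨fun a => (Y.1.toFun a).comap (N.toFun a).subtype, fun α _ hx => Y.1.map_mem α hx⟩
  left_inv W := Subfunctor.ext fun a => Submodule.comap_map_eq_of_injective
    (N.toFun a).injective_subtype _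
  right_inv Y := Subtype.ext <| Subfunctor.ext fun a =>
    (Submodule.map_comap_subtype _ _).trans (inf_eq_right.2 (Y.2 a))
  map_rel_iff' {W W'} := by
    rw [Subtype.mk_le_mk]
    exact forall_congr' fun a =>
      Submodule.map_le_map_iff_of_injective (N.toFun a).injective_subtype _ _

theorem isIndecomposable_toFunctor {X : Subfunctor M} (hX : IsDirectlyIndecomposable X) :
    IsIndecomposable X.toFunctor := by
  refine ⟨?_, fun U V hUV => ?_⟩
  · obtain ⟨a, ha⟩ : ∃ a, X.toFun a ≠ ⊥ := by simpa [eq_bot_iff_forall] using hX.1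
    obtain ⟨x, hx, hx0⟩ := Submodule.exists_mem_ne_zero_of_ne_bot ha
    exact ⟨a, ⟨x, hx⟩, fun h => hx0 (congrArg Subtype.val h)⟩
  · have h := Set.Iic.isCompl_iff.1 (X.orderIsoIic.isCompl_iff.1 (isCompl_iff_forall.2 hUV))
    have hbot : ∀ W, (X.orderIsoIic W : Subfunctor M) = ⊥ → ∀ a, W.toFun a = ⊥ := fun W hW =>
      eq_bot_iff_forall.1 <| X.orderIsoIic.injective <|
        (Subtype.ext hW).trans X.orderIsoIic.map_bot.symm
    exact (hX.2 _ _ h.1 h.2).imp (hbot U) (hbot V)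

end Subfunctor

theorem IsLocallyFiniteEndoLength.wellFoundedGT {M : C ⥤ ModuleCat.{u} k}
    (hM : IsLocallyFiniteEndoLength M) (a : C) : WellFoundedGT (Subrepresentation (endRep M a)) :=
  have := (isFiniteLength_iff_isNoetherian_isArtinian.1 (hM a)).1
  Subrepresentation.subrepresentationSubmoduleOrderIso.strictMono.wellFoundedGT

theorem IsLocallyFiniteEndoLength.wellFoundedLT {M : C ⥤ ModuleCat.{u} k}
    (hM : IsLocallyFiniteEndoLength M) (a : C) : WellFoundedLT (Subrepresentation (endRep M a)) :=
  have := (isFiniteLength_iff_isNoetherian_isArtinian.1 (hM a)).2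
  Subrepresentation.subrepresentationSubmoduleOrderIso.strictMono.wellFoundedLT

namespace Subfunctor

variable {M : C ⥤ ModuleCat.{u} k}

def toSubrepresentation (N : Subfunctor M) (a : C) : Subrepresentation (endRep M a) :=
  ⟨N.toFun a, fun g _ hx => N.map_mem g hx⟩

theorem monotone_toSubrepresentation (a : C) :
    Monotone (toSubrepresentation (M := M) · a) :=
  fun _ _ h => h a

theorem exists_mem_toFun_sSup_eq (hM : IsLocallyFiniteEndoLength M)
    {c : Set (Subfunctor M × (Subfunctor M)ᵒᵈ)} (hc : IsChain (· ≤ ·) c) (hne : c.Nonempty)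
    (a : C) : ∃ p ∈ c, (sSup c).1.toFun a = p.1.toFun a ∧
      (ofDual (sSup c).2).toFun a = (ofDual p.2).toFun a := by
  have := hM.wellFoundedGT a
  have := hM.wellFoundedLT a
  obtain ⟨p, hp, hmax⟩ := hc.exists_forall_le_of_wellFoundedGT
    ((monotone_toSubrepresentation a).prodMap (monotone_toSubrepresentation a).dual) hne
  refine ⟨p, hp, le_antisymm ?_ ((le_sSup hp).1 a), le_antisymm ((le_sSup hp).2 a) ?_⟩
  · rw [Prod.fst_sSup, toFun_sSup]
    refine sSup_le ?_
    rintro _ ⟨_, ⟨q, hq, rfl⟩, rfl⟩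
    exact (hmax q hq).1
  · rw [Prod.snd_sSup, ofDual_sSup, toFun_sInf]
    refine le_sInf ?_
    rintro _ ⟨N, ⟨q, hq, hqN⟩, rfl⟩
    rw [← ofDual_toDual N, ← hqN]
    exact (hmax q hq).2

theorem disjoint_and_sup_eq_of_isChain (hM : IsLocallyFiniteEndoLength M) {N : Subfunctor M}
    {c : Set (Subfunctor M × (Subfunctor M)ᵒᵈ)} (hc : IsChain (· ≤ ·) c) (hne : c.Nonempty)
    (h : ∀ p ∈ c, Disjoint p.1 (ofDual p.2) ∧ p.1 ⊔ ofDual p.2 = N) :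
    Disjoint (sSup c).1 (ofDual (sSup c).2) ∧ (sSup c).1 ⊔ ofDual (sSup c).2 = N := by
  rw [disjoint_iff_forall, Subfunctor.ext_iff, ← forall_and]
  intro a
  obtain ⟨p, hp, h₁, h₂⟩ := exists_mem_toFun_sSup_eq hM hc hne a
  rw [toFun_sup, h₁, h₂, ← toFun_sup, (h p hp).2]
  exact ⟨disjoint_iff_forall.1 (h p hp).1 a, rfl⟩

theorem isCompl_sSup_of_isChain (hM : IsLocallyFiniteEndoLength M)
    {c : Set (Subfunctor M × (Subfunctor M)ᵒᵈ)} (hc : IsChain (· ≤ ·) c) (hne : c.Nonempty)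
    (h : ∀ p ∈ c, IsCompl p.1 (ofDual p.2)) : IsCompl (sSup c).1 (ofDual (sSup c).2) := by
  simp only [isCompl_iff, codisjoint_iff] at h ⊢
  exact disjoint_and_sup_eq_of_isChain hM hc hne h

theorem exists_isDirectlyIndecomposable_summand (hM : IsLocallyFiniteEndoLength M)
    {N : Subfunctor M} (hN : N ≠ ⊥) :
    ∃ X Y, IsDirectlyIndecomposable X ∧ Disjoint X Y ∧ X ⊔ Y = N := by
  obtain ⟨a₀, ha₀⟩ : ∃ a, N.toFun a ≠ ⊥ := by simpa [eq_bot_iff_forall] using hN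
  set T : Set (Subfunctor M × (Subfunctor M)ᵒᵈ) :=
    {p | (Disjoint p.1 (ofDual p.2) ∧ p.1 ⊔ ofDual p.2 = N) ∧ (ofDual p.2).toFun a₀ ≠ ⊥}
  have hT₀ : (⊥, toDual N) ∈ T := ⟨⟨disjoint_bot_left, bot_sup_eq N⟩, ha₀⟩
  have hchainT : ∀ c ⊆ T, IsChain (· ≤ ·) c → ∀ y ∈ c, ∃ ub ∈ T, ∀ z ∈ c, z ≤ ub := by
    intro c hcT hc y hy
    refine ⟨sSup c, ⟨disjoint_and_sup_eq_of_isChain hM hc ⟨y, hy⟩ fun p hp => (hcT hp).1, ?_⟩,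
      fun z hz => le_sSup hz⟩
    obtain ⟨p, hp, -, h₂⟩ := exists_mem_toFun_sSup_eq hM hc ⟨y, hy⟩ a₀
    rw [h₂]
    exact (hcT hp).2
  obtain ⟨m, -, hm⟩ := zorn_le_nonempty₀ T hchainT _ hT₀
  obtain ⟨⟨hYX, hYXN⟩, hX⟩ := hm.1
  set Y := m.1
  set X := ofDual m.2
  have key : ∀ U V, Disjoint U V → U ⊔ V = X → U.toFun a₀ ≠ ⊥ → V = ⊥ := by
    intro U V hUV hUVX hU
    have hmem : (Y ⊔ V, toDual U) ∈ T := by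
      refine ⟨⟨?_, ?_⟩, hU⟩
      · show Disjoint (Y ⊔ V) U
        exact hUV.symm.disjoint_sup_left_of_disjoint_sup_right (by rwa [sup_comm V, hUVX])
      · show Y ⊔ V ⊔ U = N
        rw [sup_assoc, sup_comm V, hUVX, hYXN]
    have hUX : U ≤ X := hUVX ▸ le_sup_left
    have hVY : V ≤ Y := le_sup_right.trans (hm.2 hmem ⟨le_sup_left, hUX⟩).1
    exact disjoint_self.1 (hYX.mono hVY (hUVX ▸ le_sup_right))
  refine ⟨X, Y, ⟨fun h => hX (by rw [h]; rfl), fun U V hUV hUVX => ?_⟩, hYX.symm,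
    sup_comm Y X ▸ hYXN⟩
  by_cases hU : U.toFun a₀ = ⊥
  · refine Or.inl (key V U hUV.symm (by rwa [sup_comm]) fun hV => hX ?_)
    rw [← hUVX, toFun_sup, hU, hV, bot_sup_eq]
  · exact Or.inr (key U V hUV hUVX hU)

end Subfunctor

theorem locallyFiniteEndoLength_directSum_indecomposable (M : C ⥤ ModuleCat.{u} k) (hM : IsLocallyFiniteEndoLength M) :
    ∃ (Λ : Type (max u v)) (Mi : Λ → Subfunctor M),
      (∀ a : C, iSupIndep (fun i : Λ => (Mi i).toFun a) ∧
        (⨆ i : Λ, (Mi i).toFun a) = ⊤) ∧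
      (∀ i : Λ, IsIndecomposable (Mi i).toFunctor) := by
  obtain ⟨S, hS, hStop, hSind⟩ := exists_sSupIndep_sSup_eq_top_of_isDirectlyIndecomposable
    (fun _ => Subfunctor.isCompl_sSup_of_isChain hM)
    (fun _ => Subfunctor.exists_isDirectlyIndecomposable_summand hM)
  refine ⟨S, Subtype.val, fun a => ⟨?_, ?_⟩,
    fun X => Subfunctor.isIndecomposable_toFunctor (hSind X X.2)⟩
  · exact Subfunctor.iSupIndep_iff_forall.1 ((sSupIndep_iff S).1 hS) a
  · rw [← Subfunctor.toFun_iSup, ← sSup_eq_iSup', hStop]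
    rfl
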